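/- Let A ∈ ℝ^{m×n}, λ̃ > 0, and S ∈ ℝ^{s×n}. Set B = Aᵀ(AAᵀ+λ̃I)^{-1/2}. If ‖BᵀSᵀSB − BᵀB‖ ≤ 1/2 (operator norm), then (1/2)(AAᵀ + λ̃I) ⪯ ASᵀSAᵀ + λ̃I ⪯ (3/2)(AAᵀ + λ̃I). -/

import Mathlib

open Matrix
open scoped Matrix.Norms.L2Operator

/-- The positive semidefinite square root of a positive semidefinite matrix
(the definition `Matrix.PosSemidef.sqrt` of the older Mathlib, since removed). -/
noncomputable def Matrix.PosSemidef.sqrt {n : Type*} [Fintype n] [DecidableEq n] {𝕜 : Type*} [RCLike 𝕜]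
    [PartialOrder 𝕜] {A : Matrix n n 𝕜} (hA : A.PosSemidef) : Matrix n n 𝕜 :=
  hA.1.eigenvectorUnitary.1 * diagonal ((↑) ∘ (Real.sqrt ∘ hA.1.eigenvalues)) *
    (star hA.1.eigenvectorUnitary : Matrix n n 𝕜)

lemma Matrix.PosSemidef.posSemidef_sqrt {k : ℕ} {A : Matrix (Fin k) (Fin k) ℝ}
    (hA : A.PosSemidef) : hA.sqrt.PosSemidef := by
  have hD : (diagonal ((RCLike.ofReal : ℝ → ℝ) ∘ (Real.sqrt ∘ hA.1.eigenvalues)) :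
      Matrix (Fin k) (Fin k) ℝ).PosSemidef :=
    posSemidef_diagonal_iff.mpr fun i => by simp [Real.sqrt_nonneg]
  have h := hD.mul_mul_conjTranspose_same hA.1.eigenvectorUnitary.1
  unfold Matrix.PosSemidef.sqrt
  rw [Matrix.star_eq_conjTranspose]
  exact h

lemma Matrix.PosSemidef.sqrt_mul_self {k : ℕ} {A : Matrix (Fin k) (Fin k) ℝ}
    (hA : A.PosSemidef) : hA.sqrt * hA.sqrt = A := by
  set U := hA.1.eigenvectorUnitary with hU
  have hUU : (star U : Matrix (Fin k) (Fin k) ℝ) * U.1 = 1 := Unitary.coe_star_mul_self U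
  have hDD : (diagonal ((RCLike.ofReal : ℝ → ℝ) ∘ (Real.sqrt ∘ hA.1.eigenvalues)) : Matrix (Fin k) (Fin k) ℝ) *
      diagonal ((RCLike.ofReal : ℝ → ℝ) ∘ (Real.sqrt ∘ hA.1.eigenvalues)) = diagonal ((RCLike.ofReal : ℝ → ℝ) ∘ hA.1.eigenvalues) := by
    rw [diagonal_mul_diagonal]
    congr 1
    funext i
    simp [Real.mul_self_sqrt (hA.eigenvalues_nonneg i)]
  unfold Matrix.PosSemidef.sqrt
  conv_rhs => rw [hA.1.spectral_theorem, Unitary.conjStarAlgAut_apply]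
  rw [← hU, ← hDD]
  calc U.1 * diagonal ((RCLike.ofReal : ℝ → ℝ) ∘ (Real.sqrt ∘ hA.1.eigenvalues)) * (star U : Matrix (Fin k) (Fin k) ℝ) *
        (U.1 * diagonal ((RCLike.ofReal : ℝ → ℝ) ∘ (Real.sqrt ∘ hA.1.eigenvalues)) * (star U : Matrix (Fin k) (Fin k) ℝ))
      = U.1 * diagonal ((RCLike.ofReal : ℝ → ℝ) ∘ (Real.sqrt ∘ hA.1.eigenvalues)) * ((star U : Matrix (Fin k) (Fin k) ℝ) *
        U.1) * diagonal ((RCLike.ofReal : ℝ → ℝ) ∘ (Real.sqrt ∘ hA.1.eigenvalues)) * (star U : Matrix (Fin k) (Fin k) ℝ) := by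
        simp only [Matrix.mul_assoc]
    _ = _ := by rw [hUU, Matrix.mul_one]; simp only [Matrix.mul_assoc]

/-- If `E` is a real symmetric matrix with spectral norm at most `c`, then `c • 1 + E` is
positive semidefinite. -/
lemma psd_smul_one_add_of_norm_le {k : ℕ} (E : Matrix (Fin k) (Fin k) ℝ)
    (hE : E.IsHermitian) (c : ℝ) (hc : ‖E‖ ≤ c) :
    (c • (1 : Matrix (Fin k) (Fin k) ℝ) + E).PosSemidef := by
  have hherm : (c • (1 : Matrix (Fin k) (Fin k) ℝ) + E).IsHermitian := by
    refine Matrix.IsHermitian.add ?_ hE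
    show (c • (1 : Matrix (Fin k) (Fin k) ℝ))ᴴ = _
    rw [Matrix.conjTranspose_smul, Matrix.conjTranspose_one]
    simp
  refine PosSemidef.of_dotProduct_mulVec_nonneg hherm fun x => ?_
  set y : EuclideanSpace ℝ (Fin k) := (WithLp.equiv 2 _).symm x with hy
  have hinner : ∀ z : Fin k → ℝ, (inner ℝ ((WithLp.equiv 2 (Fin k → ℝ)).symm x)
      ((WithLp.equiv 2 (Fin k → ℝ)).symm z) : ℝ) = dotProduct (star x) z := fun z => by
    rw [dotProduct_comm]; exact EuclideanSpace.inner_toLp_toLp x z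
  have hbound : |(inner ℝ y ((WithLp.equiv 2 (Fin k → ℝ)).symm (E *ᵥ x)) : ℝ)| ≤ c * ‖y‖ ^ 2 := by
    calc |(inner ℝ y ((WithLp.equiv 2 (Fin k → ℝ)).symm (E *ᵥ x)) : ℝ)|
        ≤ ‖y‖ * ‖(WithLp.equiv 2 (Fin k → ℝ)).symm (E *ᵥ x)‖ := abs_real_inner_le_norm _ _
      _ ≤ ‖y‖ * (‖E‖ * ‖y‖) := by
          refine mul_le_mul_of_nonneg_left ?_ (norm_nonneg _)
          simpa [hy] using E.l2_opNorm_mulVec y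
      _ ≤ ‖y‖ * (c * ‖y‖) :=
          mul_le_mul_of_nonneg_left (mul_le_mul_of_nonneg_right hc (norm_nonneg _))
            (norm_nonneg _)
      _ = c * ‖y‖ ^ 2 := by ring
  have hself : dotProduct (star x) x = ‖y‖ ^ 2 := by
    rw [← hinner x, ← real_inner_self_eq_norm_sq]
  have hEx : dotProduct (star x) (E *ᵥ x)
      = (inner ℝ y ((WithLp.equiv 2 (Fin k → ℝ)).symm (E *ᵥ x)) : ℝ) := (hinner (E *ᵥ x)).symm
  have hsplit : dotProduct (star x) ((c • (1 : Matrix (Fin k) (Fin k) ℝ) + E) *ᵥ x)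
      = c * ‖y‖ ^ 2 + dotProduct (star x) (E *ᵥ x) := by
    rw [Matrix.add_mulVec, dotProduct_add, Matrix.smul_mulVec, Matrix.one_mulVec,
      dotProduct_smul, smul_eq_mul, hself]
  rw [hsplit, hEx]
  have h1 : -(c * ‖y‖ ^ 2) ≤ (inner ℝ y ((WithLp.equiv 2 (Fin k → ℝ)).symm (E *ᵥ x)) : ℝ) :=
    neg_le_of_abs_le hbound
  linarith

/-- For `A : m × n`, `λ̃ > 0`, `S : s × n`, and
`B = Aᵀ (A Aᵀ + λ̃ I)^{-1/2}`, if `‖Bᵀ Sᵀ S B − Bᵀ B‖ ≤ 1/2` in spectral norm, then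
`(1/2)(A Aᵀ + λ̃ I) ⪯ A Sᵀ S Aᵀ + λ̃ I ⪯ (3/2)(A Aᵀ + λ̃ I)` in the Loewner order. -/
theorem sketch_spectral_approximation
    (m n s : ℕ) (A : Matrix (Fin m) (Fin n) ℝ) (lam : ℝ) (hlam : 0 < lam)
    (S : Matrix (Fin s) (Fin n) ℝ)
    (hSig : (A * Aᵀ + lam • (1 : Matrix (Fin m) (Fin m) ℝ)).PosSemidef)
    (B : Matrix (Fin n) (Fin m) ℝ) (hB : B = Aᵀ * (hSig.sqrt)⁻¹)
    (hAMM : ‖Bᵀ * Sᵀ * S * B - Bᵀ * B‖ ≤ 1 / 2) :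
    ((A * Sᵀ * S * Aᵀ + lam • (1 : Matrix (Fin m) (Fin m) ℝ)
        - (1 / 2 : ℝ) • (A * Aᵀ + lam • (1 : Matrix (Fin m) (Fin m) ℝ))).PosSemidef) ∧
      (((3 / 2 : ℝ) • (A * Aᵀ + lam • (1 : Matrix (Fin m) (Fin m) ℝ))
        - (A * Sᵀ * S * Aᵀ + lam • (1 : Matrix (Fin m) (Fin m) ℝ))).PosSemidef) := by
  classical
  set Sg : Matrix (Fin m) (Fin m) ℝ := A * Aᵀ + lam • 1 with hSg
  have hSgpd : Sg.PosDef := by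
    have h1 : (A * Aᵀ).PosSemidef := by
      have := Matrix.posSemidef_self_mul_conjTranspose A
      simpa [show Aᴴ = Aᵀ from rfl] using this
    have h2 : (lam • (1 : Matrix (Fin m) (Fin m) ℝ)).PosDef := by
      rw [Matrix.smul_one_eq_diagonal]
      exact Matrix.posDef_diagonal_iff.mpr fun _ => hlam
    exact Matrix.PosDef.posSemidef_add h1 h2
  set Q : Matrix (Fin m) (Fin m) ℝ := hSig.sqrt with hQ
  have hQpsd : Q.PosSemidef := hSig.posSemidef_sqrt
  have hQherm : Qᴴ = Q := hQpsd.1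
  have hQQ : Q * Q = Sg := hSig.sqrt_mul_self
  have hQdet : IsUnit Q.det := by
    have hdet : Q.det * Q.det = Sg.det := by rw [← Matrix.det_mul, hQQ]
    have hne : Sg.det ≠ 0 := hSgpd.det_pos.ne'
    have hQd : Q.det ≠ 0 := fun h => hne (by rw [← hdet, h, mul_zero])
    exact hQd.isUnit
  have hQinv : Q⁻¹ * Q = 1 := Matrix.nonsing_inv_mul Q hQdet
  have hQinv' : Q * Q⁻¹ = 1 := Matrix.mul_nonsing_inv Q hQdet
  have hCt : (Q⁻¹)ᵀ = Q⁻¹ := by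
    have : (Q⁻¹)ᴴ = (Qᴴ)⁻¹ := Matrix.conjTranspose_nonsing_inv Q
    rw [hQherm] at this
    exact this
  set E : Matrix (Fin m) (Fin m) ℝ := Bᵀ * Sᵀ * S * B - Bᵀ * B with hE
  have hBt : Bᵀ = Q⁻¹ * A := by
    rw [hB, Matrix.transpose_mul, Matrix.transpose_transpose, hCt]
  have key : ∀ M : Matrix (Fin m) (Fin m) ℝ, Q * (Q⁻¹ * M * Q⁻¹) * Q = M := fun M => by
    calc Q * (Q⁻¹ * M * Q⁻¹) * Q = (Q * Q⁻¹) * M * (Q⁻¹ * Q) := by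
          simp only [Matrix.mul_assoc]
      _ = M := by rw [hQinv, hQinv', one_mul, Matrix.mul_one]
  have hQSgQ : Q⁻¹ * Sg * Q⁻¹ = 1 := by
    rw [← hQQ]
    calc Q⁻¹ * (Q * Q) * Q⁻¹ = (Q⁻¹ * Q) * (Q * Q⁻¹) := by simp only [Matrix.mul_assoc]
      _ = 1 := by rw [hQinv, hQinv', one_mul]
  have hQEQ : Q⁻¹ * (A * Sᵀ * S * Aᵀ - A * Aᵀ) * Q⁻¹ = E := by
    rw [hE, hBt, hB]
    simp only [Matrix.mul_sub, Matrix.sub_mul, Matrix.mul_assoc]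
  have hEherm : E.IsHermitian := by
    have h1 : (Bᵀ * Sᵀ * S * B).IsHermitian := by
      have h := (Matrix.posSemidef_conjTranspose_mul_self (S * B)).1
      have heq : (S * B)ᴴ * (S * B) = Bᵀ * Sᵀ * S * B := by
        rw [Matrix.conjTranspose_mul, show Sᴴ = Sᵀ from rfl, show Bᴴ = Bᵀ from rfl]
        simp only [Matrix.mul_assoc]
      rwa [heq] at h
    have h2 : (Bᵀ * B).IsHermitian := by
      have h := (Matrix.posSemidef_conjTranspose_mul_self B).1
      rwa [show Bᴴ = Bᵀ from rfl] at h
    exact h1.sub h2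
  have hEnorm : ‖E‖ ≤ 1 / 2 := hAMM
  -- First inequality: A Sᵀ S Aᵀ + λ I - (1/2) Sg = Q ((1/2) • 1 + E) Q
  have hM1 : A * Sᵀ * S * Aᵀ + lam • (1 : Matrix (Fin m) (Fin m) ℝ) - (1 / 2 : ℝ) • Sg
      = (A * Sᵀ * S * Aᵀ - A * Aᵀ) + (1 / 2 : ℝ) • Sg := by
    rw [hSg]; module
  have hM2 : (3 / 2 : ℝ) • Sg - (A * Sᵀ * S * Aᵀ + lam • (1 : Matrix (Fin m) (Fin m) ℝ))
      = (1 / 2 : ℝ) • Sg - (A * Sᵀ * S * Aᵀ - A * Aᵀ) := by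
    rw [hSg]; module
  have hconj1 : Q⁻¹ * ((A * Sᵀ * S * Aᵀ - A * Aᵀ) + (1 / 2 : ℝ) • Sg) * Q⁻¹
      = (1 / 2 : ℝ) • (1 : Matrix (Fin m) (Fin m) ℝ) + E := by
    rw [Matrix.mul_add, Matrix.add_mul, hQEQ]
    rw [Matrix.mul_smul, Matrix.smul_mul, hQSgQ]
    rw [add_comm]
  have hconj2 : Q⁻¹ * ((1 / 2 : ℝ) • Sg - (A * Sᵀ * S * Aᵀ - A * Aᵀ)) * Q⁻¹
      = (1 / 2 : ℝ) • (1 : Matrix (Fin m) (Fin m) ℝ) + (-E) := by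
    rw [Matrix.mul_sub, Matrix.sub_mul, hQEQ]
    rw [Matrix.mul_smul, Matrix.smul_mul, hQSgQ]
    rw [sub_eq_add_neg]
  have hnegE : ‖(-E : Matrix (Fin m) (Fin m) ℝ)‖ ≤ 1 / 2 := by
    rwa [norm_neg]
  have hN1 : ((1 / 2 : ℝ) • (1 : Matrix (Fin m) (Fin m) ℝ) + E).PosSemidef :=
    psd_smul_one_add_of_norm_le E hEherm (1 / 2) hEnorm
  have hN2 : ((1 / 2 : ℝ) • (1 : Matrix (Fin m) (Fin m) ℝ) + (-E)).PosSemidef :=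
    psd_smul_one_add_of_norm_le (-E) hEherm.neg (1 / 2) hnegE
  constructor
  · have h := hN1.mul_mul_conjTranspose_same Q
    rw [hQherm] at h
    rw [← hconj1, key] at h
    rwa [← hM1] at h
  · have h := hN2.mul_mul_conjTranspose_same Q
    rw [hQherm] at h
    rw [← hconj2, key] at h
    rwa [← hM2] at h
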